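/- For every odd integer m ≥ 3, the exponent of 2 in the binomial coefficient C(2m−3, m−3) equals α(m) − 2, where α(m) is the number of ones in the binary expansion of m. -/

import Mathlib

/-! Kummer's theorem gives `ν₂ C(m + k, k) = α(k) + α(m) - α(m + k)`. For `m = 2u + 3` and
`k = m - 3 = 2u` the binary expansions of `k = 2u`, `m = 2(u + 1) + 1` and `m + k = 4u + 3` are
read off those of `u` and `u + 1`; `α(u)` cancels, leaving `α(u + 1) - 1 = α(m) - 2`. -/

theorem Nat.digits_sum_add_base_mul {b x : ℕ} (hb : 1 < b) (hx : x < b) (n : ℕ) :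
    (b.digits (x + b * n)).sum = x + (b.digits n).sum := by
  rcases eq_or_ne x 0 with rfl | hx0
  · rcases eq_or_ne n 0 with rfl | hn0
    · simp
    · rw [Nat.digits_add b hb 0 n hx (Or.inr hn0), List.sum_cons]
  · rw [Nat.digits_add b hb x n hx (Or.inl hx0), List.sum_cons]

theorem padicValNat_two_choose_add (n k : ℕ) :
    padicValNat 2 ((n + k).choose k) =
      (Nat.digits 2 k).sum + (Nat.digits 2 n).sum - (Nat.digits 2 (n + k)).sum := by
  simpa using sub_one_mul_padicValNat_choose_eq_sub_sum_digits' (p := 2) (n := n) (k := k)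

/-- For odd `m ≥ 3`, the exponent of 2 in `C(2m-3, m-3)` equals `α(m) - 2`,
where `α(m) = (Nat.digits 2 m).sum` is the number of ones in the binary
expansion of `m`. -/
theorem stmt_5 (m : ℕ) (hm : 3 ≤ m) (hmo : Odd m) :
    padicValNat 2 ((2 * m - 3).choose (m - 3)) = (Nat.digits 2 m).sum - 2 := by
  obtain ⟨u, rfl⟩ : ∃ u, m = 2 * u + 3 := by
    obtain ⟨t, rfl⟩ := hmo
    exact ⟨t - 1, by omega⟩
  have hk : (Nat.digits 2 (2 * u)).sum = (Nat.digits 2 u).sum := by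
    simpa using Nat.digits_sum_add_base_mul one_lt_two two_pos u
  have hsm : (Nat.digits 2 (2 * u + 3)).sum = 1 + (Nat.digits 2 (u + 1)).sum := by
    rw [show 2 * u + 3 = 1 + 2 * (u + 1) by ring,
      Nat.digits_sum_add_base_mul one_lt_two one_lt_two]
  have hmk : (Nat.digits 2 (4 * u + 3)).sum = 2 + (Nat.digits 2 u).sum := by
    rw [show 4 * u + 3 = 1 + 2 * (1 + 2 * u) by ring,
      Nat.digits_sum_add_base_mul one_lt_two one_lt_two,
      Nat.digits_sum_add_base_mul one_lt_two one_lt_two]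
    ring
  rw [show 2 * (2 * u + 3) - 3 = (2 * u + 3) + 2 * u by omega, show 2 * u + 3 - 3 = 2 * u by omega,
    padicValNat_two_choose_add, show 2 * u + 3 + 2 * u = 4 * u + 3 by ring, hk, hsm, hmk]
  omega
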